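/- arXiv:1605.09616 — 2 statements merged into one kernel-verified Lean document; each statement's English description precedes it below -/
import Mathlib

section
/- Let ψ : ℝⁿ → [0,∞) be a radial locally integrable function viewed as an even function on ℝ, and fix y ∈ ℝ^{n-1}. If ∫_M^∞ ψ(r)/(1+r²) dr = ∞ for all large M, then the function x ↦ ψ(√(x² + |y|²)) on ℝ satisfies ∫_M^∞ ψ(√(x² + |y|²))/(1+x²) dx = ∞. -/
/-!
Substitute `x = √(r² - b²)`, i.e. `r = √(x² + b²)`, on a tail `r > √(M² + b²)`. The Jacobian
`r / √(r² - b²)` is at least `1` and `1 + x² ≤ 1 + r²`, so `ψ r / (1 + r²)` is dominated by the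
pulled-back slice integrand; integrability of the slice on `(M, ∞)` would therefore force
integrability of `ψ r / (1 + r²)` on a tail.
-/

open MeasureTheory Set

namespace Real

lemma sqrt_sq_sub_sq_pos {b r : ℝ} (h : b ^ 2 < r ^ 2) : 0 < √(r ^ 2 - b ^ 2) :=
  sqrt_pos.mpr (sub_pos.mpr h)

lemma sqrt_sq_sub_sq_le {b r : ℝ} (hr : 0 ≤ r) : √(r ^ 2 - b ^ 2) ≤ r :=
  sqrt_le_iff.mpr ⟨hr, by nlinarith [sq_nonneg b]⟩

lemma sqrt_sq_sub_sq_sq_add_sq {b r : ℝ} (hr : 0 ≤ r) (h : b ^ 2 ≤ r ^ 2) :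
    √(√(r ^ 2 - b ^ 2) ^ 2 + b ^ 2) = r := by
  rw [sq_sqrt (sub_nonneg.mpr h), sub_add_cancel, sqrt_sq hr]

lemma one_le_div_sqrt_sq_sub_sq {b r : ℝ} (hr : 0 ≤ r) (h : b ^ 2 < r ^ 2) :
    1 ≤ r / √(r ^ 2 - b ^ 2) :=
  (one_le_div (sqrt_sq_sub_sq_pos h)).mpr (sqrt_sq_sub_sq_le hr)

lemma hasDerivAt_sqrt_sq_sub_sq {b r : ℝ} (h : b ^ 2 < r ^ 2) :
    HasDerivAt (fun r => √(r ^ 2 - b ^ 2)) (r / √(r ^ 2 - b ^ 2)) r := by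
  have hsub : HasDerivAt (fun r : ℝ => r ^ 2 - b ^ 2) (2 * r) r := by
    simpa using (hasDerivAt_pow 2 r).sub_const (b ^ 2)
  convert hsub.sqrt (sub_pos.mpr h).ne' using 1
  field_simp

lemma pos_and_lt_sq_of_sqrt_lt {c r : ℝ} (hr : √c < r) : 0 < r ∧ c < r ^ 2 := by
  have hr0 : 0 < r := (sqrt_nonneg c).trans_lt hr
  exact ⟨hr0, (sqrt_lt' hr0).mp hr⟩

lemma sq_lt_sq_of_sqrt_sq_add_sq_lt {M b r : ℝ} (hr : √(M ^ 2 + b ^ 2) < r) : b ^ 2 < r ^ 2 := by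
  nlinarith [(pos_and_lt_sq_of_sqrt_lt hr).2, sq_nonneg M]

lemma strictMonoOn_sqrt_sq_sub_sq (b : ℝ) :
    StrictMonoOn (fun r => √(r ^ 2 - b ^ 2)) (Ici |b|) := by
  intro r hr s _ hrs
  have hbr : b ^ 2 ≤ r ^ 2 := sq_le_sq' (neg_le_of_abs_le hr) (le_of_abs_le hr)
  exact sqrt_lt_sqrt (sub_nonneg.mpr hbr) (by nlinarith [(abs_nonneg b).trans hr])

lemma image_sqrt_sq_sub_sq_Ioi {M : ℝ} (hM : 0 ≤ M) (b : ℝ) :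
    (fun r => √(r ^ 2 - b ^ 2)) '' Ioi √(M ^ 2 + b ^ 2) = Ioi M := by
  ext x
  constructor
  · rintro ⟨r, hr, rfl⟩
    obtain ⟨-, hMr⟩ := pos_and_lt_sq_of_sqrt_lt hr
    exact lt_sqrt_of_sq_lt (by linarith)
  · intro hx
    have hx0 : 0 ≤ x := hM.trans (le_of_lt hx)
    refine ⟨√(x ^ 2 + b ^ 2), sqrt_lt_sqrt (by positivity) (by nlinarith [mem_Ioi.mp hx]), ?_⟩
    show √(√(x ^ 2 + b ^ 2) ^ 2 - b ^ 2) = x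
    rw [sq_sqrt (by positivity), add_sub_cancel_right, sqrt_sq hx0]

lemma div_one_add_sq_le_jacobian_mul {y b r : ℝ} (hy : 0 ≤ y) (hr : 0 ≤ r) (h : b ^ 2 < r ^ 2) :
    y / (1 + r ^ 2) ≤ r / √(r ^ 2 - b ^ 2) * (y / (1 + √(r ^ 2 - b ^ 2) ^ 2)) := by
  have hden : 0 < 1 + (r ^ 2 - b ^ 2) := by linarith
  rw [sq_sqrt (sub_nonneg.mpr h.le)]
  calc y / (1 + r ^ 2) ≤ y / (1 + (r ^ 2 - b ^ 2)) :=
        div_le_div_of_nonneg_left hy hden (by linarith [sq_nonneg b])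
    _ ≤ r / √(r ^ 2 - b ^ 2) * (y / (1 + (r ^ 2 - b ^ 2))) :=
        le_mul_of_one_le_left (by positivity) (one_le_div_sqrt_sq_sub_sq hr h)

end Real

open Real

theorem MeasureTheory.IntegrableOn.comp_sqrt_sq_sub_sq {g : ℝ → ℝ} {M : ℝ} (hM : 0 ≤ M) (b : ℝ)
    (hg : IntegrableOn g (Ioi M)) :
    IntegrableOn (fun r => r / √(r ^ 2 - b ^ 2) * g √(r ^ 2 - b ^ 2)) (Ioi √(M ^ 2 + b ^ 2)) := by
  have hb : ∀ r ∈ Ioi √(M ^ 2 + b ^ 2), 0 < r ∧ b ^ 2 < r ^ 2 := fun r hr =>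
    ⟨(pos_and_lt_sq_of_sqrt_lt hr).1, sq_lt_sq_of_sqrt_sq_add_sq_lt hr⟩
  have hinj : InjOn (fun r => √(r ^ 2 - b ^ 2)) (Ioi √(M ^ 2 + b ^ 2)) := by
    refine (strictMonoOn_sqrt_sq_sub_sq b).injOn.mono fun r hr => ?_
    exact mem_Ici.mpr (abs_le_of_sq_le_sq (hb r hr).2.le (hb r hr).1.le)
  rw [← image_sqrt_sq_sub_sq_Ioi hM b, integrableOn_image_iff_integrableOn_abs_deriv_smul
    measurableSet_Ioi (fun r hr => (hasDerivAt_sqrt_sq_sub_sq (hb r hr).2).hasDerivWithinAt)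
    hinj] at hg
  refine hg.congr_fun (fun r hr => ?_) measurableSet_Ioi
  obtain ⟨hr0, hbr⟩ := hb r hr
  simp only [smul_eq_mul]
  rw [abs_of_pos (div_pos hr0 (sqrt_sq_sub_sq_pos hbr))]

theorem radial_slice_divergence_general (ψ : ℝ → ℝ) (hψ0 : ∀ r, 0 ≤ ψ r)
    (hloc : LocallyIntegrable ψ volume) (b : ℝ)
    (hdiv : ∀ M : ℝ, ¬ IntegrableOn (fun r => ψ r / (1 + r ^ 2)) (Set.Ioi M)) :
    ∀ M : ℝ, ¬ IntegrableOn
      (fun x => ψ (Real.sqrt (x ^ 2 + b ^ 2)) / (1 + x ^ 2)) (Set.Ioi M) := by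
  intro M hslice
  set M₀ := max M 0
  have hpull := (hslice.mono_set (Ioi_subset_Ioi (le_max_left M 0))).comp_sqrt_sq_sub_sq
    (le_max_right M 0) b
  refine hdiv √(M₀ ^ 2 + b ^ 2) (Integrable.mono hpull ?_ ?_)
  · exact (hloc.aestronglyMeasurable.aemeasurable.div (by fun_prop)).aestronglyMeasurable.restrict
  filter_upwards [ae_restrict_mem measurableSet_Ioi] with r hr
  have hr0 := (pos_and_lt_sq_of_sqrt_lt hr).1
  have hbr := sq_lt_sq_of_sqrt_sq_add_sq_lt hr
  rw [sqrt_sq_sub_sq_sq_add_sq hr0.le hbr.le]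
  have hle := div_one_add_sq_le_jacobian_mul (hψ0 r) hr0.le hbr
  have hnn : 0 ≤ ψ r / (1 + r ^ 2) := div_nonneg (hψ0 r) (by positivity)
  rwa [norm_of_nonneg hnn, norm_of_nonneg (hnn.trans hle)]

theorem radial_slice_divergence (ψ : ℝ → ℝ) (hψ0 : ∀ r, 0 ≤ ψ r)
    (heven : ∀ r, ψ (-r) = ψ r) (hloc : LocallyIntegrable ψ volume) (b : ℝ)
    (hdiv : ∀ M : ℝ, ¬ IntegrableOn (fun r => ψ r / (1 + r ^ 2)) (Set.Ioi M)) :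
    ∀ M : ℝ, ¬ IntegrableOn
      (fun x => ψ (Real.sqrt (x ^ 2 + b ^ 2)) / (1 + x ^ 2)) (Set.Ioi M) :=
  radial_slice_divergence_general ψ hψ0 hloc b hdiv
end

section
/- Define F(x,y) = f(x)·P₁(y) on ℝ², where f ∈ L²(ℝ) is a nonzero function supported in {x ≤ x₀} with |f̂(u)| ≤ C e^{-|u|^{1/2}} for large |u| (such f exists by the Paley–Wiener theorem), and P₁(y) = (1/π)·1/(1+y²) is the Poisson kernel. Then F ∈ L²(ℝ²) is nonzero, supported in the half-plane {(x,y) : x ≤ x₀}, satisfies |F̂(u,v)| ≤ C e^{-ψ(u,v)} a.e. with ψ(u,v) = |u|^{1/2} + 2π|v|, and yet ∫_{ℝ²} ψ(u,v)/(1+|(u,v)|)³ du dv = ∞. -/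
/-!
`F` is the tensor product `f ⊗ P₁`, so its `L²` norm, its support and its Fourier transform
`f̂(u) · P̂₁(v)` factor; `P̂₁(v) = e^{-2π|v|}` follows by Fourier inversion from the elementary
transform of `e^{-2π|x|}`. The weight fails the integrability condition because `ψ ≥ 2π|v|`:
by the symmetry `(u, v) ↦ (v, u)`, integrability of `|v| / (1 + ‖p‖)³` would give that of
`‖p‖ / (1 + ‖p‖)³`, whose radial profile `r² / (1 + r)³` is not integrable at infinity.
-/

open MeasureTheory Real Filter FourierTransform Set
open scoped ENNReal

section LaplaceKernel

variable {a : ℝ}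

lemma integrable_exp_neg_mul_abs (ha : 0 < a) :
    Integrable fun x : ℝ => Real.exp (-(a * |x|)) := by
  have hIic : IntegrableOn (fun x : ℝ => Real.exp (-(a * |x|))) (Iic 0) :=
    (integrableOn_exp_mul_Iic ha 0).congr_fun
      (fun x hx => by rw [abs_of_nonpos (mem_Iic.1 hx), mul_neg, neg_neg]) measurableSet_Iic
  have hIoi : IntegrableOn (fun x : ℝ => Real.exp (-(a * |x|))) (Ioi 0) :=
    (integrableOn_exp_mul_Ioi (neg_neg_of_pos ha) 0).congr_fun
      (fun x hx => by simp only [abs_of_pos (mem_Ioi.1 hx), neg_mul]) measurableSet_Ioi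
  simpa [← integrableOn_univ] using hIic.union hIoi

open Complex in
lemma fourier_exp_neg_mul_abs (ha : 0 < a) (w : ℝ) :
    𝓕 (fun x : ℝ => (Real.exp (-(a * |x|)) : ℂ)) w
      = ((2 * a / (a ^ 2 + 4 * π ^ 2 * w ^ 2) : ℝ) : ℂ) := by
  set c : ℂ := a + 2 * π * w * I
  set c' : ℂ := a - 2 * π * w * I
  have hc : 0 < c.re := by simp [c, ha]
  have hc' : 0 < c'.re := by simp [c', ha]
  have hIoi : EqOn
      (fun x : ℝ => cexp (↑(-2 * π * x * w) * I) • (Real.exp (-(a * |x|)) : ℂ))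
      (fun x : ℝ => cexp (-c * x)) (Ioi 0) := fun x hx => by
    dsimp only
    rw [abs_of_pos (mem_Ioi.1 hx), smul_eq_mul, ofReal_exp, ← Complex.exp_add]
    simp only [c]; push_cast; ring_nf
  have hIic : EqOn
      (fun x : ℝ => cexp (↑(-2 * π * x * w) * I) • (Real.exp (-(a * |x|)) : ℂ))
      (fun x : ℝ => cexp (c' * x)) (Iic 0) := fun x hx => by
    dsimp only
    rw [abs_of_nonpos (mem_Iic.1 hx), smul_eq_mul, ofReal_exp, ← Complex.exp_add]
    simp only [c']; push_cast; ring_nf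
  rw [Real.fourier_real_eq_integral_exp_smul, ← intervalIntegral.integral_Iic_add_Ioi
      ((integrableOn_exp_mul_complex_Iic hc' 0).congr_fun hIic.symm measurableSet_Iic)
      ((integrableOn_exp_mul_complex_Ioi (by simpa using hc) 0).congr_fun hIoi.symm
        measurableSet_Ioi),
    setIntegral_congr_fun measurableSet_Iic hIic, setIntegral_congr_fun measurableSet_Ioi hIoi,
    integral_exp_mul_complex_Iic hc', integral_exp_mul_complex_Ioi (by simpa using hc)]
  have hc0 : c ≠ 0 := fun h => by simp [h] at hc
  have hc'0 : c' ≠ 0 := fun h => by simp [h] at hc'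
  have hcc' : c * c' = ((a ^ 2 + 4 * π ^ 2 * w ^ 2 : ℝ) : ℂ) := by
    simp only [c, c']; push_cast; ring_nf; rw [I_sq]; ring
  rw [show ((2 * a / (a ^ 2 + 4 * π ^ 2 * w ^ 2) : ℝ) : ℂ) = (c + c') / (c * c') by
    rw [hcc']; push_cast; ring]
  field_simp
  simp

end LaplaceKernel

noncomputable def halfPlanePoissonKernel (y : ℝ) : ℂ := ((1 / (π * (1 + y ^ 2)) : ℝ) : ℂ)

lemma norm_halfPlanePoissonKernel (y : ℝ) :
    ‖halfPlanePoissonKernel y‖ = 1 / (π * (1 + y ^ 2)) := by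
  rw [halfPlanePoissonKernel, Complex.norm_real, Real.norm_of_nonneg (by positivity)]

lemma integrable_halfPlanePoissonKernel : Integrable halfPlanePoissonKernel := by
  refine Integrable.ofReal (𝕜 := ℂ) (f := fun y => 1 / (π * (1 + y ^ 2))) ?_
  simpa only [one_div, mul_inv] using integrable_inv_one_add_sq.const_mul π⁻¹

lemma memLp_halfPlanePoissonKernel : MemLp halfPlanePoissonKernel 2 := by
  have hcont : Continuous halfPlanePoissonKernel := by
    unfold halfPlanePoissonKernel
    fun_prop (disch := intro; positivity)
  refine (memLp_two_iff_integrable_sq_norm hcont.aestronglyMeasurable).2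
    ((integrable_halfPlanePoissonKernel.norm.const_mul π⁻¹).mono' (by fun_prop)
      (.of_forall fun y => ?_))
  have hle : ‖halfPlanePoissonKernel y‖ ≤ π⁻¹ := by
    rw [norm_halfPlanePoissonKernel, one_div]
    exact inv_anti₀ (by positivity) (le_mul_of_one_le_right pi_pos.le (by nlinarith))
  rw [Real.norm_of_nonneg (by positivity), sq]
  exact mul_le_mul_of_nonneg_right hle (norm_nonneg _)

lemma not_halfPlanePoissonKernel_ae_eq_zero :
    ¬ halfPlanePoissonKernel =ᵐ[volume] 0 := fun h => by
  obtain ⟨y, hy⟩ := h.exists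
  exact Complex.ofReal_ne_zero.2 (by positivity) hy

lemma fourier_exp_neg_two_pi_mul_abs (w : ℝ) :
    𝓕 (fun x : ℝ => (Real.exp (-(2 * π * |x|)) : ℂ)) w = halfPlanePoissonKernel w := by
  rw [fourier_exp_neg_mul_abs (by positivity), halfPlanePoissonKernel]
  congr 1
  field_simp
  ring

lemma fourier_halfPlanePoissonKernel (v : ℝ) :
    𝓕 halfPlanePoissonKernel v = Real.exp (-(2 * π * |v|)) := by
  set g : ℝ → ℂ := fun x => Real.exp (-(2 * π * |x|))
  have hP : halfPlanePoissonKernel = 𝓕 g :=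
    funext fun w => (fourier_exp_neg_two_pi_mul_abs w).symm
  have hinv : 𝓕⁻ (𝓕 g) = g := Continuous.fourierInv_fourier_eq (by fun_prop)
    (integrable_exp_neg_mul_abs (by positivity)).ofReal (hP ▸ integrable_halfPlanePoissonKernel)
  rw [hP, ← neg_neg v, ← Real.fourierInv_eq_fourier_neg, hinv, abs_neg]

noncomputable def planeEquivProd : EuclideanSpace ℝ (Fin 2) ≃ᵐ ℝ × ℝ :=
  (MeasurableEquiv.toLp 2 (Fin 2 → ℝ)).symm.trans MeasurableEquiv.finTwoArrow

lemma measurePreserving_planeEquivProd : MeasurePreserving planeEquivProd :=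
  (volume_preserving_finTwoArrow ℝ).comp
    (EuclideanSpace.volume_preserving_symm_measurableEquiv_toLp (Fin 2))

def planeTensor (f g : ℝ → ℂ) (p : EuclideanSpace ℝ (Fin 2)) : ℂ := f (p 0) * g (p 1)

lemma planeTensor_eq_comp (f g : ℝ → ℂ) :
    planeTensor f g = (fun z : ℝ × ℝ => f z.1 * g z.2) ∘ planeEquivProd := rfl

lemma fourier_planeTensor (f g : ℝ → ℂ) (p : EuclideanSpace ℝ (Fin 2)) :
    𝓕 (planeTensor f g) p = 𝓕 f (p 0) * 𝓕 g (p 1) := by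
  have hinner (z : ℝ × ℝ) : inner ℝ (planeEquivProd.symm z) p = z.1 * p 0 + z.2 * p 1 := by
    simp [planeEquivProd, PiLp.inner_apply, Fin.sum_univ_two, mul_comm]
  rw [Real.fourier_eq, ← (measurePreserving_planeEquivProd.symm _).integral_comp
    planeEquivProd.symm.measurableEmbedding, Real.fourier_real_eq, Real.fourier_real_eq,
    ← integral_prod_mul, Measure.volume_eq_prod]
  congr 1 with z
  rw [hinner, planeTensor_eq_comp, Function.comp_apply, MeasurableEquiv.apply_symm_apply,
    neg_add, AddChar.map_add_eq_mul, Circle.smul_def, Circle.smul_def, Circle.smul_def,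
    Circle.coe_mul, smul_eq_mul, smul_eq_mul, smul_eq_mul]
  ring

lemma MeasureTheory.MemLp.planeTensor {f g : ℝ → ℂ} {q : ℝ≥0∞} (hq0 : q ≠ 0) (hq : q ≠ ∞)
    (hf : MemLp f q) (hg : MemLp g q) : MemLp (planeTensor f g) q := by
  rw [planeTensor_eq_comp]
  refine MemLp.comp_measurePreserving ?_ measurePreserving_planeEquivProd
  have hmeas : AEStronglyMeasurable (fun z : ℝ × ℝ => f z.1 * g z.2) := by
    rw [Measure.volume_eq_prod]
    exact hf.1.comp_fst.mul hg.1.comp_snd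
  refine (integrable_norm_rpow_iff hmeas hq0 hq).1 ?_
  rw [Measure.volume_eq_prod]
  refine (((integrable_norm_rpow_iff hf.1 hq0 hq).2 hf).mul_prod
    ((integrable_norm_rpow_iff hg.1 hq0 hq).2 hg)).congr (.of_forall fun z => ?_)
  simp only [norm_mul, Real.mul_rpow (norm_nonneg _) (norm_nonneg _)]

lemma not_planeTensor_ae_eq_zero {f g : ℝ → ℂ} (hf : ¬ f =ᵐ[volume] 0)
    (hg : ¬ g =ᵐ[volume] 0) : ¬ planeTensor f g =ᵐ[volume] 0 := by
  intro h
  have hprod : (fun z : ℝ × ℝ => f z.1 * g z.2) =ᵐ[volume] 0 := by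
    simpa [planeTensor_eq_comp, Function.comp_def, Pi.zero_def] using h.comp_tendsto
      (measurePreserving_planeEquivProd.symm _).quasiMeasurePreserving.tendsto_ae
  rw [Measure.volume_eq_prod] at hprod
  refine hf ((Measure.ae_ae_of_ae_prod hprod).mono fun x hx => by_contra fun hfx => hg ?_)
  exact hx.mono fun y hy => (mul_eq_zero.1 hy).resolve_left hfx

lemma exists_le_mul_exp_neg_sqrt_abs {φ : ℝ → ℝ} {M C R : ℝ} (hM : ∀ u, φ u ≤ M)
    (hb : ∀ u, R ≤ |u| → φ u ≤ C * Real.exp (-√|u|)) :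
    ∃ C', ∀ u, φ u ≤ C' * Real.exp (-√|u|) := by
  refine ⟨max C (|M| * Real.exp √R), fun u => ?_⟩
  rcases le_or_gt R |u| with hu | hu
  · exact (hb u hu).trans (by gcongr; exact le_max_left _ _)
  · calc φ u ≤ |M| * Real.exp √R * Real.exp (-√|u|) := by
          rw [mul_assoc, ← Real.exp_add]
          refine (hM u).trans ((le_abs_self M).trans (le_mul_of_one_le_right (abs_nonneg M) ?_))
          exact Real.one_le_exp (by linarith [Real.sqrt_le_sqrt hu.le])
      _ ≤ _ := by gcongr; exact le_max_right _ _

section Integrability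

open Module

variable {E : Type*} [NormedAddCommGroup E] [NormedSpace ℝ E] [FiniteDimensional ℝ E]
  [MeasurableSpace E] [BorelSpace E] [Nontrivial E]

lemma not_integrable_norm_div_one_add_norm_pow_finrank_add_one (μ : Measure E)
    [μ.IsAddHaarMeasure] :
    ¬ Integrable (fun x : E => ‖x‖ / (1 + ‖x‖) ^ (finrank ℝ E + 1)) μ := by
  set n := finrank ℝ E
  have hn : n - 1 + 1 = n := Nat.sub_add_cancel finrank_pos
  intro h
  rw [integrable_fun_norm_addHaar μ (f := fun y => y / (1 + y) ^ (n + 1))] at h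
  -- in polar coordinates the integrand is `y ^ n / (1 + y) ^ (n + 1) ≥ 2⁻¹ ^ (n + 1) / y`
  -- for `y ≥ 1`
  have hrecip : IntegrableOn (fun y : ℝ => y ^ (-1 : ℝ)) (Ioi 1) := by
    refine ((h.mono_set (Ioi_subset_Ioi zero_le_one)).const_mul (2 ^ (n + 1))).mono'
      (by fun_prop) (ae_restrict_of_forall_mem measurableSet_Ioi fun y (hy : 1 < y) => ?_)
    have hy0 : 0 < y := one_pos.trans hy
    rw [Real.rpow_neg_one, Real.norm_of_nonneg (inv_nonneg.2 hy0.le), smul_eq_mul,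
      ← mul_div_assoc, ← pow_succ, hn, ← mul_div_assoc, le_div_iff₀ (by positivity)]
    calc y⁻¹ * (1 + y) ^ (n + 1) ≤ y⁻¹ * (2 * y) ^ (n + 1) := by gcongr; linarith
      _ = 2 ^ (n + 1) * y ^ n := by rw [mul_pow, pow_succ y]; field_simp
  exact lt_irrefl _ ((integrableOn_Ioi_rpow_iff one_pos).1 hrecip)

end Integrability

lemma norm_le_abs_apply_zero_add_abs_apply_one (p : EuclideanSpace ℝ (Fin 2)) :
    ‖p‖ ≤ |p 0| + |p 1| := by
  rw [EuclideanSpace.norm_eq, Fin.sum_univ_two, Real.norm_eq_abs, Real.norm_eq_abs,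
    Real.sqrt_le_left (by positivity)]
  nlinarith [abs_nonneg (p 0), abs_nonneg (p 1)]

lemma not_integrable_abs_apply_one_div_one_add_norm_pow_three :
    ¬ Integrable (fun p : EuclideanSpace ℝ (Fin 2) => |p 1| / (1 + ‖p‖) ^ 3) := by
  intro h1
  set σ := LinearIsometryEquiv.piLpCongrLeft 2 ℝ ℝ (Equiv.swap (0 : Fin 2) 1)
  have h0 : Integrable (fun p : EuclideanSpace ℝ (Fin 2) => |p 0| / (1 + ‖p‖) ^ 3) := by
    simpa [σ, Function.comp_def] using σ.measurePreserving.integrable_comp_of_integrable h1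
  refine not_integrable_norm_div_one_add_norm_pow_finrank_add_one
    (volume : Measure (EuclideanSpace ℝ (Fin 2))) ?_
  rw [finrank_euclideanSpace_fin]
  refine (h0.add h1).mono'
    (continuous_norm.div (by fun_prop) fun p => by positivity).aestronglyMeasurable
    (.of_forall fun p => ?_)
  rw [Real.norm_of_nonneg (by positivity), Pi.add_apply, ← add_div]
  gcongr
  exact norm_le_abs_apply_zero_add_abs_apply_one p

lemma not_integrable_sqrt_abs_add_two_pi_mul_abs_div_one_add_norm_pow_three :
    ¬ Integrable (fun p : EuclideanSpace ℝ (Fin 2) =>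
      (√|p 0| + 2 * π * |p 1|) / (1 + ‖p‖) ^ 3) := fun h => by
  refine not_integrable_abs_apply_one_div_one_add_norm_pow_three
    ((h.const_mul (2 * π)⁻¹).mono'
      (Continuous.div (f := fun p : EuclideanSpace ℝ (Fin 2) => |p 1|) (by fun_prop) (by fun_prop)
        fun p => by positivity).aestronglyMeasurable
      (.of_forall fun p => ?_))
  rw [Real.norm_of_nonneg (by positivity), ← mul_div_assoc]
  gcongr
  rw [le_inv_mul_iff₀ (by positivity)]
  linarith [Real.sqrt_nonneg |p 0|]

theorem nonradial_counterexample (f : ℝ → ℂ) (hf2 : MemLp f 2 volume)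
    (hfne : ¬ f =ᵐ[volume] (0 : ℝ → ℂ))
    (x₀ : ℝ) (hsupp : ∀ x, f x ≠ 0 → x ≤ x₀)
    (C R : ℝ) (hb : ∀ u : ℝ, R ≤ |u| → ‖𝓕 f u‖ ≤ C * Real.exp (-Real.sqrt |u|)) :
    ∀ F : EuclideanSpace ℝ (Fin 2) → ℂ,
      (∀ p, F p = f (p 0) * ((1 / (π * (1 + (p 1) ^ 2)) : ℝ) : ℂ)) →
      MemLp F 2 volume ∧ ¬ F =ᵐ[volume] 0 ∧ (∀ p, F p ≠ 0 → p 0 ≤ x₀) ∧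
      (∃ C' : ℝ, ∀ᵐ p : EuclideanSpace ℝ (Fin 2) ∂volume,
        ‖𝓕 F p‖ ≤ C' * Real.exp (-(Real.sqrt |p 0| + 2 * π * |p 1|))) ∧
      ¬ Integrable (fun p : EuclideanSpace ℝ (Fin 2) =>
        (Real.sqrt |p 0| + 2 * π * |p 1|) / (1 + ‖p‖) ^ 3) := by
  intro F hF
  obtain rfl : F = planeTensor f halfPlanePoissonKernel := funext hF
  obtain ⟨C', hC'⟩ := exists_le_mul_exp_neg_sqrt_abs (φ := fun u => ‖𝓕 f u‖)
    (fun u => VectorFourier.norm_fourierIntegral_le_integral_norm _ _ _ f u) hb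
  refine ⟨hf2.planeTensor two_ne_zero ENNReal.ofNat_ne_top memLp_halfPlanePoissonKernel,
    not_planeTensor_ae_eq_zero hfne not_halfPlanePoissonKernel_ae_eq_zero,
    fun p hp => hsupp _ (left_ne_zero_of_mul hp), ⟨C', .of_forall fun p => ?_⟩,
    not_integrable_sqrt_abs_add_two_pi_mul_abs_div_one_add_norm_pow_three⟩
  rw [fourier_planeTensor, norm_mul, fourier_halfPlanePoissonKernel, Complex.norm_real,
    Real.norm_of_nonneg (Real.exp_pos _).le, neg_add, Real.exp_add, ← mul_assoc]
  exact mul_le_mul_of_nonneg_right (hC' _) (Real.exp_pos _).le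
end
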